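/- arXiv:2511.16295 — 6 statements merged into one kernel-verified Lean document; each statement's English description precedes it below -/
import Mathlib

section
/- Let (l,ω) ∈ (0,π)×(−π/2,π/2) with (l,ω) ≠ (π/2,0), and set r̄ = r̄(l,ω) := arctan(cos(ω)/sin(l)) ∈ (0,π/2). Then the function h(r) = ⟨β₊(r), β₋(r)⟩ satisfies h(r̄) = (cos(2l) − cos(2ω))/2 > −1, and r̄ is the unique global minimum of h on [0,π/2]: for every r ∈ [0,π/2] with r ≠ r̄ one has h(r) > h(r̄). -/
/-!
Expanding the inner product gives `h(r) = 1 - (A cos r + B sin r)²` with `A = sin l`, `B = cos ω`.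
By Lagrange's identity `(A cos r + B sin r)² + (A sin r - B cos r)² = A² + B²`, so `h` is minimal
exactly where `A sin r = B cos r`, i.e. at `r = arctan (B / A)`, with minimum `1 - A² - B²`.
This value is `(cos 2l - cos 2ω)/2`, and it exceeds `-1` unless `sin² l = cos² ω = 1`.
-/

open Real

noncomputable def dot4 (p q : Fin 4 → ℝ) : ℝ := ∑ m, p m * q m

noncomputable def vE : Fin 4 → ℝ := ![1, 0, 0, 0]
noncomputable def vI : Fin 4 → ℝ := ![0, 1, 0, 0]
noncomputable def vJ : Fin 4 → ℝ := ![0, 0, 1, 0]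
noncomputable def vK : Fin 4 → ℝ := ![0, 0, 0, 1]
noncomputable def vP : Fin 4 → ℝ := ![1 / Real.sqrt 2, 1 / Real.sqrt 2, 0, 0]
noncomputable def vM : Fin 4 → ℝ := ![1 / Real.sqrt 2, -(1 / Real.sqrt 2), 0, 0]

noncomputable def zP (l : ℝ) : Fin 4 → ℝ := Real.cos l • vK + Real.sin l • vP
noncomputable def zM (l : ℝ) : Fin 4 → ℝ := Real.cos l • vK + Real.sin l • vM
noncomputable def uP (ω : ℝ) : Fin 4 → ℝ := Real.sin ω • vJ - Real.cos ω • vM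
noncomputable def uM (ω : ℝ) : Fin 4 → ℝ := Real.sin ω • vJ - Real.cos ω • vP

/-- The geodesic edge `β₊` of the pentagon, `β₊(r) = cos r · z₊ + sin r · u₊`. -/
noncomputable def betaP (l ω r : ℝ) : Fin 4 → ℝ := Real.cos r • zP l + Real.sin r • uP ω

/-- The geodesic edge `β₋` of the pentagon, `β₋(r) = cos r · z₋ + sin r · u₋`. -/
noncomputable def betaM (l ω r : ℝ) : Fin 4 → ℝ := Real.cos r • zM l + Real.sin r • uM ω

lemma dot4_betaP_betaM (l ω r : ℝ) :
    dot4 (betaP l ω r) (betaM l ω r) = 1 - (sin l * cos r + cos ω * sin r) ^ 2 := by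
  have h2 : (√2)⁻¹ ^ 2 = 1 / 2 := by rw [inv_pow, sq_sqrt zero_le_two]; norm_num
  simp only [dot4, betaP, betaM, zP, zM, uP, uM, vJ, vK, vP, vM, Fin.sum_univ_four,
    Pi.add_apply, Pi.sub_apply, Pi.smul_apply, smul_eq_mul, Matrix.cons_val_zero,
    Matrix.cons_val_one, Matrix.cons_val_two, Matrix.cons_val_three, Matrix.head_cons,
    Matrix.tail_cons, one_div]
  linear_combination -4 * sin l * cos r * cos ω * sin r * h2 + cos r ^ 2 * sin_sq_add_cos_sq l
    + sin r ^ 2 * sin_sq_add_cos_sq ω + sin_sq_add_cos_sq r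

lemma mul_cos_add_mul_sin_sq_add_mul_sin_sub_mul_cos_sq (A B r : ℝ) :
    (A * cos r + B * sin r) ^ 2 + (A * sin r - B * cos r) ^ 2 = A ^ 2 + B ^ 2 := by
  linear_combination (A ^ 2 + B ^ 2) * sin_sq_add_cos_sq r

lemma mul_sin_arctan_sub_mul_cos_arctan {A : ℝ} (hA : A ≠ 0) (B : ℝ) :
    A * sin (arctan (B / A)) - B * cos (arctan (B / A)) = 0 := by
  rw [sin_arctan, cos_arctan]
  field_simp
  ring

lemma eq_arctan_of_mul_sin_eq_mul_cos {A B r : ℝ} (hA : A ≠ 0)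
    (hr : r ∈ Set.Ioc (-(π / 2)) (π / 2)) (h : A * sin r = B * cos r) : r = arctan (B / A) := by
  rcases hr.2.lt_or_eq with hlt | rfl
  · have hcos : cos r ≠ 0 := (cos_pos_of_mem_Ioo ⟨hr.1, hlt⟩).ne'
    have htan : tan r = B / A := by
      rw [tan_eq_sin_div_cos, div_eq_div_iff hcos hA]
      linear_combination h
    rw [← htan, arctan_tan hr.1 hlt]
  · rw [sin_pi_div_two, cos_pi_div_two] at h
    exact absurd (by simpa using h) hA

lemma mul_cos_add_mul_sin_arctan_sq {A : ℝ} (hA : A ≠ 0) (B : ℝ) :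
    (A * cos (arctan (B / A)) + B * sin (arctan (B / A))) ^ 2 = A ^ 2 + B ^ 2 := by
  rw [← mul_cos_add_mul_sin_sq_add_mul_sin_sub_mul_cos_sq A B,
    mul_sin_arctan_sub_mul_cos_arctan hA B]
  ring

lemma mul_cos_add_mul_sin_sq_lt_arctan {A B r : ℝ} (hA : A ≠ 0)
    (hr : r ∈ Set.Ioc (-(π / 2)) (π / 2)) (hne : r ≠ arctan (B / A)) :
    (A * cos r + B * sin r) ^ 2 < (A * cos (arctan (B / A)) + B * sin (arctan (B / A))) ^ 2 := by
  have hsub : A * sin r - B * cos r ≠ 0 := fun h ↦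
    hne (eq_arctan_of_mul_sin_eq_mul_cos hA hr (sub_eq_zero.mp h))
  rw [mul_cos_add_mul_sin_arctan_sq hA, ← mul_cos_add_mul_sin_sq_add_mul_sin_sub_mul_cos_sq A B r]
  exact lt_add_of_pos_right _ (sq_pos_of_ne_zero hsub)

lemma one_sub_sin_sq_sub_cos_sq (l ω : ℝ) :
    1 - (sin l ^ 2 + cos ω ^ 2) = (cos (2 * l) - cos (2 * ω)) / 2 := by
  rw [cos_two_mul, cos_two_mul]
  linear_combination -sin_sq_add_cos_sq l

lemma sin_sq_add_cos_sq_lt_two {l ω : ℝ} (hl : l ∈ Set.Ioo 0 π)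
    (hω : ω ∈ Set.Ioo (-(π / 2)) (π / 2)) (hne : (l, ω) ≠ (π / 2, 0)) :
    sin l ^ 2 + cos ω ^ 2 < 2 := by
  have hcos : cos l = 0 → l = π / 2 := by
    rw [← sin_pi_div_two_sub, sin_eq_zero_iff_of_lt_of_lt (by linarith [hl.2, pi_pos])
      (by linarith [hl.1, pi_pos])]
    intro h
    linarith
  have hsin : sin ω = 0 → ω = 0 :=
    (sin_eq_zero_iff_of_lt_of_lt (by linarith [hω.1, pi_pos]) (by linarith [hω.2, pi_pos])).mp
  have hnz : cos l ≠ 0 ∨ sin ω ≠ 0 := by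
    by_contra! h
    exact hne (Prod.ext (hcos h.1) (hsin h.2))
  have : 0 < cos l ^ 2 + sin ω ^ 2 := by
    rcases hnz with h | h <;> positivity
  linarith [sin_sq_add_cos_sq l, sin_sq_add_cos_sq ω]

/-- `r̄ = arctan(cos ω / sin l)` lies in `(0,π/2)`, the value of
`h(r) = ⟨β₊(r), β₋(r)⟩` at `r̄` is `(cos 2l − cos 2ω)/2 > −1`, and `r̄` is the unique
global minimum of `h` on `[0,π/2]`. -/
theorem stmt2 (l ω : ℝ) (hl : l ∈ Set.Ioo 0 π) (hω : ω ∈ Set.Ioo (-(π/2)) (π/2))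
    (hne : (l, ω) ≠ (π/2, 0)) :
    Real.arctan (Real.cos ω / Real.sin l) ∈ Set.Ioo 0 (π/2) ∧
    dot4 (betaP l ω (Real.arctan (Real.cos ω / Real.sin l)))
        (betaM l ω (Real.arctan (Real.cos ω / Real.sin l))) =
      (Real.cos (2*l) - Real.cos (2*ω)) / 2 ∧
    -1 < (Real.cos (2*l) - Real.cos (2*ω)) / 2 ∧
    ∀ r ∈ Set.Icc (0:ℝ) (π/2), r ≠ Real.arctan (Real.cos ω / Real.sin l) →
      dot4 (betaP l ω (Real.arctan (Real.cos ω / Real.sin l)))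
          (betaM l ω (Real.arctan (Real.cos ω / Real.sin l))) <
        dot4 (betaP l ω r) (betaM l ω r) := by
  have hA : 0 < sin l := sin_pos_of_pos_of_lt_pi hl.1 hl.2
  have hB : 0 < cos ω := cos_pos_of_mem_Ioo hω
  have hmin : dot4 (betaP l ω (arctan (cos ω / sin l))) (betaM l ω (arctan (cos ω / sin l))) =
      (cos (2 * l) - cos (2 * ω)) / 2 := by
    rw [dot4_betaP_betaM, mul_cos_add_mul_sin_arctan_sq hA.ne', one_sub_sin_sq_sub_cos_sq]
  refine ⟨⟨arctan_pos.mpr (div_pos hB hA),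
    arctan_lt_pi_div_two _⟩, hmin, ?_, fun r hr hr' ↦ ?_⟩
  · rw [← one_sub_sin_sq_sub_cos_sq]
    linarith [sin_sq_add_cos_sq_lt_two hl hω hne]
  · rw [dot4_betaP_betaM, dot4_betaP_betaM]
    have hr : r ∈ Set.Ioc (-(π / 2)) (π / 2) := ⟨by linarith [hr.1, pi_pos], hr.2⟩
    linarith [mul_cos_add_mul_sin_sq_lt_arctan hA.ne' hr hr']
end

section
/- Let (l,ω) ∈ (0,π)×(−π/2,π/2) with (l,ω) ≠ (π/2,0), and set r̄ = arctan(cos(ω)/sin(l)). Then for every r ∈ [0, r̄], the vectors β₊(r) and β₋(r) are linearly independent in ℝ⁴, and the vector i = (0,1,0,0) lies in the linear span of {β₊(r), β₋(r)}; consequently the great circle of S³ through β₊(r) and β₋(r) passes through ±i. -/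
open Real

/-!
Both edges split as `β±(r) = w ± b • i` with `w = (β₊ + β₋) / 2` orthogonal to `i` and
`b = (sin l cos r + cos ω sin r) / √2 > 0` for `0 ≤ r < π/2` (`betaAvg` and `betaIComp`).
Hence `i = (β₊ - β₋) / (2b)`, and `β₊, β₋` are independent as soon as `w ≠ 0`. Since `cos r > 0`,
the coordinates of `w` vanish together only if `cos l = 0`; then `sin r ≠ 0` and so `sin ω = 0`, i.e. `(l, ω) = (π/2, 0)`.
-/

section PairAddSmulSubSmul

variable {K V : Type*} [Field K] [NeZero (2 : K)] [AddCommGroup V] [Module K V] {x v : V} {b : K}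

theorem LinearIndependent.pair_add_smul_sub_smul (h : LinearIndependent K ![x, v]) (hb : b ≠ 0) :
    LinearIndependent K ![x + b • v, x - b • v] := by
  rw [LinearIndependent.pair_iff] at h ⊢
  intro s t hst
  obtain ⟨hsum, hdiff⟩ := h (s + t) ((s - t) * b) (by rw [← hst]; module)
  have hst' : s = t := by simpa [sub_eq_zero, hb] using hdiff
  subst hst'
  simpa [← two_mul, two_ne_zero] using hsum

theorem mem_span_pair_add_smul_sub_smul (hb : b ≠ 0) :
    v ∈ Submodule.span K {x + b • v, x - b • v} := by
  rw [Submodule.mem_span_pair]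
  refine ⟨(2 * b)⁻¹, -(2 * b)⁻¹, ?_⟩
  calc (2 * b)⁻¹ • (x + b • v) + -(2 * b)⁻¹ • (x - b • v) = ((2 * b)⁻¹ * (2 * b)) • v := by module
    _ = v := by rw [inv_mul_cancel₀ (mul_ne_zero two_ne_zero hb), one_smul]

end PairAddSmulSubSmul

theorem linearIndependent_pair_single {ι K : Type*} [DecidableEq ι] [Field K] {w : ι → K} {i : ι}
    (hw : w ≠ 0) (hwi : w i = 0) : LinearIndependent K ![w, Pi.single i 1] := by
  rw [LinearIndependent.pair_iff' hw]
  intro a h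
  simpa [hwi] using congrFun h i

theorem vI_eq_single : vI = Pi.single 1 1 := by
  ext m; fin_cases m <;> rfl

noncomputable def betaAvg (l ω r : ℝ) : Fin 4 → ℝ :=
  ((sin l * cos r - cos ω * sin r) / √2) • vE + (sin ω * sin r) • vJ + (cos l * cos r) • vK

noncomputable def betaIComp (l ω r : ℝ) : ℝ := (sin l * cos r + cos ω * sin r) / √2

theorem betaP_eq (l ω r : ℝ) : betaP l ω r = betaAvg l ω r + betaIComp l ω r • vI := by
  ext m; fin_cases m <;>
    simp [betaP, zP, uP, betaAvg, betaIComp, vE, vI, vJ, vK, vP, vM] <;> ring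

theorem betaM_eq (l ω r : ℝ) : betaM l ω r = betaAvg l ω r - betaIComp l ω r • vI := by
  ext m; fin_cases m <;>
    simp [betaM, zM, uM, betaAvg, betaIComp, vE, vI, vJ, vK, vP, vM] <;> ring

theorem betaAvg_apply_one (l ω r : ℝ) : betaAvg l ω r 1 = 0 := by
  simp [betaAvg, vE, vJ, vK]

theorem betaIComp_pos {l ω r : ℝ} (hl : l ∈ Set.Ioo 0 π) (hω : ω ∈ Set.Ioo (-(π / 2)) (π / 2))
    (hr₀ : 0 ≤ r) (hr : r < π / 2) : 0 < betaIComp l ω r := by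
  have := sin_pos_of_pos_of_lt_pi hl.1 hl.2
  have := cos_pos_of_mem_Ioo hω
  have := cos_pos_of_mem_Ioo ⟨by linarith [pi_pos], hr⟩
  have := sin_nonneg_of_nonneg_of_le_pi hr₀ (by linarith [pi_pos])
  unfold betaIComp
  positivity

theorem betaAvg_eq_zero_iff {l ω r : ℝ} : betaAvg l ω r = 0 ↔
    sin l * cos r = cos ω * sin r ∧ sin ω * sin r = 0 ∧ cos l * cos r = 0 := by
  simp [betaAvg, vE, vJ, vK, funext_iff, Fin.forall_fin_succ, sub_eq_zero]

theorem betaAvg_ne_zero {l ω r : ℝ} (hl : l ∈ Set.Ioo 0 π) (hω : ω ∈ Set.Ioo (-(π / 2)) (π / 2))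
    (hr₀ : 0 ≤ r) (hr : r < π / 2) (hne : (l, ω) ≠ (π / 2, 0)) : betaAvg l ω r ≠ 0 := by
  rw [Ne, betaAvg_eq_zero_iff]
  rintro ⟨h₀, h₂, h₃⟩
  have hcr : 0 < cos r := cos_pos_of_mem_Ioo ⟨by linarith [pi_pos], hr⟩
  have hl' : l = π / 2 :=
    injOn_cos ⟨hl.1.le, hl.2.le⟩ ⟨by linarith [pi_pos], by linarith [pi_pos]⟩
      (by rw [(mul_eq_zero.1 h₃).resolve_right hcr.ne', cos_pi_div_two])
  have hsr : sin r ≠ 0 := by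
    intro hsr
    rw [hl', sin_pi_div_two, hsr, mul_zero, one_mul] at h₀
    exact hcr.ne' h₀
  have hω' : ω = 0 :=
    (sin_eq_zero_iff_of_lt_of_lt (by linarith [hω.1, pi_pos]) (by linarith [hω.2, pi_pos])).1
      ((mul_eq_zero.1 h₂).resolve_right hsr)
  exact hne (by rw [hl', hω'])

/-- for `r ∈ [0, r̄]`, the vectors `β₊(r)` and `β₋(r)` are linearly independent
and `±i` lie in their linear span (so the great circle through them passes through `±i`). -/
theorem stmt4 (l ω : ℝ) (hl : l ∈ Set.Ioo 0 π) (hω : ω ∈ Set.Ioo (-(π/2)) (π/2))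
    (hne : (l, ω) ≠ (π/2, 0)) :
    ∀ r ∈ Set.Icc (0:ℝ) (Real.arctan (Real.cos ω / Real.sin l)),
      LinearIndependent ℝ ![betaP l ω r, betaM l ω r] ∧
      vI ∈ Submodule.span ℝ ({betaP l ω r, betaM l ω r} : Set (Fin 4 → ℝ)) ∧
      -vI ∈ Submodule.span ℝ ({betaP l ω r, betaM l ω r} : Set (Fin 4 → ℝ)) := by
  rintro r ⟨hr₀, hr⟩
  have hr' : r < π / 2 := hr.trans_lt (arctan_lt_pi_div_two _)
  have hb := (betaIComp_pos hl hω hr₀ hr').ne'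
  have hI : vI ∈ Submodule.span ℝ {betaP l ω r, betaM l ω r} := by
    rw [betaP_eq, betaM_eq]
    exact mem_span_pair_add_smul_sub_smul hb
  refine ⟨?_, hI, neg_mem hI⟩
  rw [betaP_eq, betaM_eq, vI_eq_single]
  exact (linearIndependent_pair_single (betaAvg_ne_zero hl hω hr₀ hr' hne)
    (betaAvg_apply_one l ω r)).pair_add_smul_sub_smul hb
end

section
/- Let (l,ω) ∈ (0,π)×(−π/2,π/2) with (l,ω) ≠ (π/2,0), set r̄ = arctan(cos(ω)/sin(l)), and fix r ∈ [0, r̄]. Let h = ⟨β₊(r), β₋(r)⟩ ∈ (−1,1), ℓ = arccos(h), and for s ∈ [0,ℓ] let α_r(s) = cos(s)·β₊(r) + sin(s)·(β₋(r) − h·β₊(r))/√(1−h²) (an arc-length parameterization of the minimizing geodesic segment in S³ from β₊(r) to β₋(r)). Then for every s ∈ [0,ℓ]: ⟨α_r(s), k⟩ > 0 if l ∈ (0,π/2), ⟨α_r(s), k⟩ = 0 if l = π/2, and ⟨α_r(s), k⟩ < 0 if l ∈ (π/2,π). -/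
open Real

/-- Arc-length parameterization of the minimizing geodesic segment of `S³` from `β₊(r)`
to `β₋(r)`:  `α_r(s) = cos s · β₊(r) + sin s · (β₋(r) − h·β₊(r))/√(1−h²)`,
where `h = ⟨β₊(r), β₋(r)⟩`. -/
noncomputable def alphaArc (l ω r s : ℝ) : Fin 4 → ℝ :=
  Real.cos s • betaP l ω r +
    Real.sin s • ((Real.sqrt (1 - (dot4 (betaP l ω r) (betaM l ω r))^2))⁻¹ •
      (betaM l ω r - dot4 (betaP l ω r) (betaM l ω r) • betaP l ω r))

/-!
Both endpoints `β₊(r)`, `β₋(r)` have the same `k`-coordinate `cos l cos r`, so along the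
geodesic `α_r` from one to the other the `k`-coordinate is `cos l cos r` times
`cos s + sin s · (1 - cos ℓ) / sin ℓ = (sin (ℓ - s) + sin s) / sin ℓ`, which is positive for
`s ∈ [0, ℓ]`. Since `r < π/2`, the sign is that of `cos l`. The bounds `-1 < h < 1` come from
writing `1 - h` and `1 + h` as sums of squares.
-/

theorem sin_sub_add_sin_pos {L s : ℝ} (hL0 : 0 < L) (hLπ : L < π) (hs0 : 0 ≤ s) (hsL : s ≤ L) :
    0 < sin (L - s) + sin s := by
  rcases hs0.eq_or_lt with rfl | hs0
  · simpa using sin_pos_of_pos_of_lt_pi hL0 hLπ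
  · exact add_pos_of_nonneg_of_pos (sin_nonneg_of_nonneg_of_le_pi (by linarith) (by linarith))
      (sin_pos_of_pos_of_lt_pi hs0 (by linarith))

theorem cos_add_sin_mul_one_sub_cos_div_sin_pos {L s : ℝ} (hL0 : 0 < L) (hLπ : L < π)
    (hs0 : 0 ≤ s) (hsL : s ≤ L) : 0 < cos s + sin s * ((sin L)⁻¹ * (1 - cos L)) := by
  have hsinL : 0 < sin L := sin_pos_of_pos_of_lt_pi hL0 hLπ
  have h_eq : cos s + sin s * ((sin L)⁻¹ * (1 - cos L)) = (sin (L - s) + sin s) / sin L := by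
    rw [sin_sub]
    field_simp
    ring
  rw [h_eq]
  exact div_pos (sin_sub_add_sin_pos hL0 hLπ hs0 hsL) hsinL

theorem cos_add_sin_mul_one_sub_div_sqrt_pos {h s : ℝ} (hm1 : -1 < h) (h1 : h < 1)
    (hs0 : 0 ≤ s) (hs : s ≤ arccos h) : 0 < cos s + sin s * ((√(1 - h ^ 2))⁻¹ * (1 - h)) := by
  have := cos_add_sin_mul_one_sub_cos_div_sin_pos (arccos_pos.2 h1) (arccos_lt_pi.2 hm1) hs0 hs
  rwa [sin_arccos, cos_arccos hm1.le h1.le] at this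

theorem geodesic_dotProduct {n : Type*} [Fintype n] {p q v : n → ℝ} {c : ℝ}
    (hp : p ⬝ᵥ v = c) (hq : q ⬝ᵥ v = c) (a h s : ℝ) :
    (cos s • p + sin s • (a • (q - h • p))) ⬝ᵥ v = c * (cos s + sin s * (a * (1 - h))) := by
  simp only [add_dotProduct, smul_dotProduct, sub_dotProduct, hp, hq, smul_eq_mul]
  ring

theorem betaP_dot_vK (l ω r : ℝ) : dot4 (betaP l ω r) vK = cos l * cos r := by
  simp [dot4, betaP, zP, uP, vK, vP, vJ, vM, Fin.sum_univ_four]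
  ring

theorem betaM_dot_vK (l ω r : ℝ) : dot4 (betaM l ω r) vK = cos l * cos r := by
  simp [dot4, betaM, zM, uM, vK, vP, vJ, vM, Fin.sum_univ_four]
  ring

theorem alphaArc_dot_vK (l ω r s : ℝ) :
    dot4 (alphaArc l ω r s) vK = cos l * cos r *
      (cos s + sin s * ((√(1 - dot4 (betaP l ω r) (betaM l ω r) ^ 2))⁻¹ *
        (1 - dot4 (betaP l ω r) (betaM l ω r)))) :=
  geodesic_dotProduct (betaP_dot_vK l ω r) (betaM_dot_vK l ω r) _ _ _

theorem betaP_dot_betaM (l ω r : ℝ) :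
    dot4 (betaP l ω r) (betaM l ω r) = sin ω ^ 2 * sin r ^ 2 + cos l ^ 2 * cos r ^ 2
      - 2 * sin l * cos ω * sin r * cos r := by
  have h2 : √2 ^ 2 = 2 := sq_sqrt (by norm_num)
  simp [dot4, betaP, betaM, zP, zM, uP, uM, vK, vP, vJ, vM, Fin.sum_univ_four]
  field_simp
  linear_combination 2 * sin l * cos ω * sin r * cos r * h2

theorem one_sub_betaP_dot_betaM (l ω r : ℝ) :
    1 - dot4 (betaP l ω r) (betaM l ω r) = (sin l * cos r + cos ω * sin r) ^ 2 := by
  rw [betaP_dot_betaM]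
  linear_combination (-sin r ^ 2) * sin_sq_add_cos_sq ω - cos r ^ 2 * sin_sq_add_cos_sq l
    - sin_sq_add_cos_sq r

theorem one_add_betaP_dot_betaM (l ω r : ℝ) :
    1 + dot4 (betaP l ω r) (betaM l ω r) =
      (sin l * cos r - cos ω * sin r) ^ 2 + 2 * (sin ω * sin r) ^ 2 + 2 * (cos l * cos r) ^ 2 := by
  rw [betaP_dot_betaM]
  linear_combination (-sin r ^ 2) * sin_sq_add_cos_sq ω - cos r ^ 2 * sin_sq_add_cos_sq l
    - sin_sq_add_cos_sq r

theorem betaP_dot_betaM_lt_one {l ω r : ℝ} (hl : l ∈ Set.Ioo 0 π)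
    (hω : ω ∈ Set.Ioo (-(π / 2)) (π / 2)) (hr0 : 0 ≤ r) (hr : r < π / 2) :
    dot4 (betaP l ω r) (betaM l ω r) < 1 := by
  have hpos : 0 < sin l * cos r + cos ω * sin r :=
    add_pos_of_pos_of_nonneg
      (mul_pos (sin_pos_of_pos_of_lt_pi hl.1 hl.2) (cos_pos_of_mem_Ioo ⟨by linarith, hr⟩))
      (mul_nonneg (cos_pos_of_mem_Ioo hω).le (sin_nonneg_of_nonneg_of_le_pi hr0 (by linarith)))
  linarith [one_sub_betaP_dot_betaM l ω r, pow_pos hpos 2]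

theorem neg_one_lt_betaP_dot_betaM {l ω r : ℝ} (hl : l ∈ Set.Ioo 0 π)
    (hω : ω ∈ Set.Ioo (-(π / 2)) (π / 2)) (hne : (l, ω) ≠ (π / 2, 0)) (hr0 : 0 ≤ r)
    (hr : r < π / 2) : -1 < dot4 (betaP l ω r) (betaM l ω r) := by
  by_contra! hle
  have hsum := one_add_betaP_dot_betaM l ω r
  have hcr : 0 < cos r := cos_pos_of_mem_Ioo ⟨by linarith, hr⟩
  obtain ⟨hA, hB, hC⟩ :
      sin l * cos r - cos ω * sin r = 0 ∧ sin ω * sin r = 0 ∧ cos l * cos r = 0 := by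
    refine ⟨?_, ?_, ?_⟩ <;> refine pow_eq_zero_iff two_ne_zero |>.1 ?_ <;>
      linarith [sq_nonneg (sin l * cos r - cos ω * sin r), sq_nonneg (sin ω * sin r),
        sq_nonneg (cos l * cos r)]
  have hl2 : l = π / 2 := by
    rw [← arccos_cos hl.1.le hl.2.le, (mul_eq_zero.1 hC).resolve_right hcr.ne', arccos_zero]
  have hsr : sin r ≠ 0 := by
    rintro hsr
    rw [hl2, sin_pi_div_two, hsr] at hA
    linarith
  have hω0 : ω = 0 :=
    (sin_eq_zero_iff_of_lt_of_lt (by linarith [hω.1, pi_pos]) (by linarith [hω.2, pi_pos])).1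
      ((mul_eq_zero.1 hB).resolve_right hsr)
  exact hne (by rw [hl2, hω0])

/-- for `r ∈ [0,r̄]`, `h = ⟨β₊(r),β₋(r)⟩ ∈ (−1,1)`, and along the minimizing
geodesic arc from `β₊(r)` to `β₋(r)` (of length `ℓ = arccos h`) the `k`-coordinate is
positive if `l ∈ (0,π/2)`, zero if `l = π/2`, and negative if `l ∈ (π/2,π)`. -/
theorem stmt6 (l ω : ℝ) (hl : l ∈ Set.Ioo 0 π) (hω : ω ∈ Set.Ioo (-(π/2)) (π/2))
    (hne : (l, ω) ≠ (π/2, 0)) (r : ℝ)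
    (hr : r ∈ Set.Icc (0:ℝ) (Real.arctan (Real.cos ω / Real.sin l))) :
    dot4 (betaP l ω r) (betaM l ω r) ∈ Set.Ioo (-1 : ℝ) 1 ∧
    ∀ s ∈ Set.Icc (0:ℝ) (Real.arccos (dot4 (betaP l ω r) (betaM l ω r))),
      (l ∈ Set.Ioo 0 (π/2) → 0 < dot4 (alphaArc l ω r s) vK) ∧
      (l = π/2 → dot4 (alphaArc l ω r s) vK = 0) ∧
      (l ∈ Set.Ioo (π/2) π → dot4 (alphaArc l ω r s) vK < 0) := by
  have hr' : r < π / 2 := hr.2.trans_lt (arctan_lt_pi_div_two _)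
  have hm1 := neg_one_lt_betaP_dot_betaM hl hω hne hr.1 hr'
  have h1 := betaP_dot_betaM_lt_one hl hω hr.1 hr'
  have hcr : 0 < cos r := cos_pos_of_mem_Ioo ⟨by linarith [hr.1, pi_pos], hr'⟩
  refine ⟨⟨hm1, h1⟩, fun s hs => ?_⟩
  have hF := cos_add_sin_mul_one_sub_div_sqrt_pos hm1 h1 hs.1 hs.2
  rw [alphaArc_dot_vK]
  refine ⟨fun hl' => ?_, fun hl' => ?_, fun hl' => ?_⟩
  · exact mul_pos (mul_pos (cos_pos_of_mem_Ioo ⟨by linarith [hl'.1, pi_pos], hl'.2⟩) hcr) hF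
  · rw [hl', cos_pi_div_two, zero_mul, zero_mul]
  · have hcl : cos l < 0 := cos_neg_of_pi_div_two_lt_of_lt hl'.1 (by linarith [hl'.2, pi_pos])
    exact mul_neg_of_neg_of_pos (mul_neg_of_neg_of_pos hcl hcr) hF
end

section
/- Let (l,ω) ∈ (0,π/2)×(0,π/2). Define J_x = (√2·sin(2ω), 0, cos(2l)+cos(2ω), 0)/√(2·sin²(2ω) + (cos(2l)+cos(2ω))²) and J_α = (√2·cos(l)·sin(ω), 0, cos(l)·cos(ω), −sin(l)·sin(ω))/√(cos²l + sin²ω). Then J_x and J_α are unit vectors; J_x is orthogonal to each of i, k and x_{l,ω}; J_α is orthogonal to each of i, z₊ and x_{l,ω}; and ⟨J_x, J_α⟩ = 2·cos(l)·cos(ω)·√(cos²l + sin²ω) / √(2·sin²(2ω) + (cos(2l)+cos(2ω))²), which lies in (0,1). In particular, the angle arccos⟨J_x, J_α⟩ between the totally geodesic two-spheres S³ ∩ Span{i,k,x_{l,ω}} and S³ ∩ Span{i,z₊,x_{l,ω}} lies in (0,π/2). -/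
open Real

/-- `E(l,ω) = √((cos²l + sin²ω)(sin²l + cos²ω))`. -/
noncomputable def Efun (l ω : ℝ) : ℝ :=
  Real.sqrt ((Real.cos l ^ 2 + Real.sin ω ^ 2) * (Real.sin l ^ 2 + Real.cos ω ^ 2))

/-- The midpoint `x_{l,ω}` of the edge `α`. -/
noncomputable def xlw (l ω : ℝ) : Fin 4 → ℝ :=
  (Efun l ω)⁻¹ •
    ![(-(Real.cos (2*l) + Real.cos (2*ω))) / 2, 0,
      Real.sin (2*ω) / Real.sqrt 2, Real.sin (2*l) / Real.sqrt 2]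

/-- Unit normal `J_x` to the totally geodesic two-sphere `S³ ∩ Span{i,k,x_{l,ω}}`. -/
noncomputable def Jx (l ω : ℝ) : Fin 4 → ℝ :=
  (Real.sqrt (2 * Real.sin (2*ω) ^ 2 + (Real.cos (2*l) + Real.cos (2*ω)) ^ 2))⁻¹ •
    ![Real.sqrt 2 * Real.sin (2*ω), 0, Real.cos (2*l) + Real.cos (2*ω), 0]

/-- Unit normal `J_α` to the totally geodesic two-sphere `S³ ∩ Span{i,z₊,x_{l,ω}}`. -/
noncomputable def Ja (l ω : ℝ) : Fin 4 → ℝ :=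
  (Real.sqrt (Real.cos l ^ 2 + Real.sin ω ^ 2))⁻¹ •
    ![Real.sqrt 2 * Real.cos l * Real.sin ω, 0,
      Real.cos l * Real.cos ω, -(Real.sin l * Real.sin ω)]

/-!
Both normals are rescalings of explicit vectors, so every claim except the bounds is a
polynomial identity in `cos l, sin l, cos ω, sin ω` and `√2`. The bounds come from the
decomposition `2 sin² 2ω + (cos 2l + cos 2ω)² = (2 cos l cos ω)² (cos² l + sin² ω) +
(2 sin l sin ω)² (sin² l + cos² ω)`: its first summand is the square of the numerator of
`⟨J_x, J_α⟩` and its second is positive on the open square.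
-/

lemma dot4_smul_left (c : ℝ) (p q : Fin 4 → ℝ) : dot4 (c • p) q = c * dot4 p q := by
  simp only [dot4, Pi.smul_apply, smul_eq_mul, Finset.mul_sum, mul_assoc]

lemma dot4_smul_right (c : ℝ) (p q : Fin 4 → ℝ) : dot4 p (c • q) = c * dot4 p q := by
  simp only [dot4, Pi.smul_apply, smul_eq_mul, Finset.mul_sum, mul_left_comm]

lemma dot4_vec4 (a₀ a₁ a₂ a₃ b₀ b₁ b₂ b₃ : ℝ) :
    dot4 ![a₀, a₁, a₂, a₃] ![b₀, b₁, b₂, b₃] = a₀ * b₀ + a₁ * b₁ + a₂ * b₂ + a₃ * b₃ := by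
  simp [dot4, Fin.sum_univ_four]

lemma dot4_inv_sqrt_smul_self {v : Fin 4 → ℝ} {D : ℝ} (hv : dot4 v v = D) (hD : 0 < D) :
    dot4 ((√D)⁻¹ • v) ((√D)⁻¹ • v) = 1 := by
  rw [dot4_smul_left, dot4_smul_right, hv, ← mul_assoc, ← mul_inv, mul_self_sqrt hD.le,
    inv_mul_cancel₀ hD.ne']

lemma zP_eq (l : ℝ) : zP l = ![sin l / √2, sin l / √2, 0, cos l] := by
  ext m
  fin_cases m <;> simp [zP, vK, vP, div_eq_mul_inv]

lemma sqrt_two_mul_self : √2 * √2 = 2 := mul_self_sqrt zero_le_two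

section Normals

variable (l ω : ℝ)

lemma dot4_Jx_self (hD : 0 < 2 * sin (2*ω) ^ 2 + (cos (2*l) + cos (2*ω)) ^ 2) :
    dot4 (Jx l ω) (Jx l ω) = 1 := by
  refine dot4_inv_sqrt_smul_self ?_ hD
  rw [dot4_vec4]
  linear_combination sin (2*ω) ^ 2 * sqrt_two_mul_self

lemma dot4_Ja_self (hD : 0 < cos l ^ 2 + sin ω ^ 2) : dot4 (Ja l ω) (Ja l ω) = 1 := by
  refine dot4_inv_sqrt_smul_self ?_ hD
  rw [dot4_vec4]
  linear_combination cos l ^ 2 * sin ω ^ 2 * sqrt_two_mul_self + cos l ^ 2 * sin_sq_add_cos_sq ω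
    + sin ω ^ 2 * sin_sq_add_cos_sq l

lemma dot4_Jx_vI : dot4 (Jx l ω) vI = 0 := by
  rw [Jx, vI, dot4_smul_left, dot4_vec4]; ring

lemma dot4_Jx_vK : dot4 (Jx l ω) vK = 0 := by
  rw [Jx, vK, dot4_smul_left, dot4_vec4]; ring

lemma dot4_Ja_vI : dot4 (Ja l ω) vI = 0 := by
  rw [Ja, vI, dot4_smul_left, dot4_vec4]; ring

lemma dot4_Ja_zP : dot4 (Ja l ω) (zP l) = 0 := by
  rw [Ja, zP_eq, dot4_smul_left, dot4_vec4]
  refine mul_eq_zero_of_right _ ?_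
  field_simp
  ring

lemma dot4_Jx_xlw : dot4 (Jx l ω) (xlw l ω) = 0 := by
  rw [Jx, xlw, dot4_smul_left, dot4_smul_right, dot4_vec4]
  refine mul_eq_zero_of_right _ (mul_eq_zero_of_right _ ?_)
  field_simp
  linear_combination -(sin (2*ω) * (cos (2*l) + cos (2*ω))) * sqrt_two_mul_self

lemma dot4_Ja_xlw : dot4 (Ja l ω) (xlw l ω) = 0 := by
  rw [Ja, xlw, dot4_smul_left, dot4_smul_right, dot4_vec4]
  refine mul_eq_zero_of_right _ (mul_eq_zero_of_right _ ?_)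
  rw [sin_two_mul, sin_two_mul, cos_two_mul_eq_one_sub l, cos_two_mul ω]
  field_simp
  linear_combination 2 * cos l * sin ω * (sin l ^ 2 - cos ω ^ 2) * sqrt_two_mul_self

lemma dot4_Jx_Ja : dot4 (Jx l ω) (Ja l ω) =
    2 * cos l * cos ω * √(cos l ^ 2 + sin ω ^ 2) /
      √(2 * sin (2*ω) ^ 2 + (cos (2*l) + cos (2*ω)) ^ 2) := by
  have hdir : dot4 ![√2 * sin (2*ω), 0, cos (2*l) + cos (2*ω), 0]
      ![√2 * cos l * sin ω, 0, cos l * cos ω, -(sin l * sin ω)] =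
      2 * cos l * cos ω * (cos l ^ 2 + sin ω ^ 2) := by
    rw [dot4_vec4, sin_two_mul, cos_two_mul, cos_two_mul]
    linear_combination 2 * sin ω * cos ω * cos l * sin ω * sqrt_two_mul_self
      + 2 * cos l * cos ω * sin_sq_add_cos_sq ω
  rw [Jx, Ja, dot4_smul_left, dot4_smul_right, hdir]
  calc _ = 2 * cos l * cos ω * ((cos l ^ 2 + sin ω ^ 2) / √(cos l ^ 2 + sin ω ^ 2)) /
        √(2 * sin (2*ω) ^ 2 + (cos (2*l) + cos (2*ω)) ^ 2) := by ring
    _ = _ := by rw [div_sqrt]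

lemma sq_norm_Jx_decomp :
    2 * sin (2*ω) ^ 2 + (cos (2*l) + cos (2*ω)) ^ 2 =
      (2 * cos l * cos ω) ^ 2 * (cos l ^ 2 + sin ω ^ 2)
        + (2 * sin l * sin ω) ^ 2 * (sin l ^ 2 + cos ω ^ 2) := by
  simp only [sin_two_mul, cos_two_mul l, cos_two_mul_eq_one_sub ω, mul_pow, sin_sq l, cos_sq' ω]
  ring

lemma dot4_Jx_Ja_mem_Ioo (hcl : 0 < cos l) (hcω : 0 < cos ω) (hsl : 0 < sin l)
    (hsω : 0 < sin ω) : dot4 (Jx l ω) (Ja l ω) ∈ Set.Ioo 0 1 := by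
  rw [dot4_Jx_Ja]
  have hgap : (2 * cos l * cos ω) ^ 2 * (cos l ^ 2 + sin ω ^ 2) <
      2 * sin (2*ω) ^ 2 + (cos (2*l) + cos (2*ω)) ^ 2 := by
    rw [sq_norm_Jx_decomp]
    exact lt_add_of_pos_right _ (by positivity)
  have hnum : 2 * cos l * cos ω * √(cos l ^ 2 + sin ω ^ 2) =
      √((2 * cos l * cos ω) ^ 2 * (cos l ^ 2 + sin ω ^ 2)) := by
    rw [sqrt_mul (sq_nonneg _), sqrt_sq (by positivity)]
  have hDx : 0 < √(2 * sin (2*ω) ^ 2 + (cos (2*l) + cos (2*ω)) ^ 2) :=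
    sqrt_pos.2 ((by positivity : (0 : ℝ) < _).trans hgap)
  refine ⟨by positivity, ?_⟩
  rw [div_lt_one hDx, hnum]
  exact sqrt_lt_sqrt (by positivity) hgap

end Normals

/-- `J_x, J_α` are unit vectors, `J_x ⟂ i, k, x_{l,ω}`, `J_α ⟂ i, z₊, x_{l,ω}`,
and `⟨J_x,J_α⟩` has the stated value in `(0,1)`, so the angle between the corresponding
totally geodesic two-spheres lies in `(0,π/2)`. -/
theorem stmt8 (l ω : ℝ) (hl : l ∈ Set.Ioo 0 (π/2)) (hω : ω ∈ Set.Ioo 0 (π/2)) :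
    dot4 (Jx l ω) (Jx l ω) = 1 ∧
    dot4 (Ja l ω) (Ja l ω) = 1 ∧
    dot4 (Jx l ω) vI = 0 ∧
    dot4 (Jx l ω) vK = 0 ∧
    dot4 (Jx l ω) (xlw l ω) = 0 ∧
    dot4 (Ja l ω) vI = 0 ∧
    dot4 (Ja l ω) (zP l) = 0 ∧
    dot4 (Ja l ω) (xlw l ω) = 0 ∧
    dot4 (Jx l ω) (Ja l ω) =
      2 * Real.cos l * Real.cos ω * Real.sqrt (Real.cos l ^ 2 + Real.sin ω ^ 2) /
        Real.sqrt (2 * Real.sin (2*ω) ^ 2 + (Real.cos (2*l) + Real.cos (2*ω)) ^ 2) ∧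
    dot4 (Jx l ω) (Ja l ω) ∈ Set.Ioo (0:ℝ) 1 ∧
    Real.arccos (dot4 (Jx l ω) (Ja l ω)) ∈ Set.Ioo 0 (π/2) := by
  have hcl : 0 < cos l := cos_pos_of_mem_Ioo ⟨by linarith [hl.1, pi_pos], hl.2⟩
  have hcω : 0 < cos ω := cos_pos_of_mem_Ioo ⟨by linarith [hω.1, pi_pos], hω.2⟩
  have hsl : 0 < sin l := sin_pos_of_pos_of_lt_pi hl.1 (by linarith [hl.2, pi_pos])
  have hsω : 0 < sin ω := sin_pos_of_pos_of_lt_pi hω.1 (by linarith [hω.2, pi_pos])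
  have hDx : 0 < 2 * sin (2*ω) ^ 2 + (cos (2*l) + cos (2*ω)) ^ 2 := by
    rw [sq_norm_Jx_decomp]; positivity
  have hmem := dot4_Jx_Ja_mem_Ioo l ω hcl hcω hsl hsω
  exact ⟨dot4_Jx_self l ω hDx, dot4_Ja_self l ω (by positivity), dot4_Jx_vI l ω,
    dot4_Jx_vK l ω, dot4_Jx_xlw l ω, dot4_Ja_vI l ω, dot4_Ja_zP l ω, dot4_Ja_xlw l ω,
    dot4_Jx_Ja l ω, hmem, arccos_pos.2 hmem.2, arccos_lt_pi_div_two.2 hmem.1⟩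
end

section
/- Let L ∈ (0,π/2] and let c : [0,L] → ℝ³ be a unit-speed, twice continuously differentiable curve on the unit sphere S² (‖c(t)‖ = 1, ‖c'(t)‖ = 1) whose geodesic curvature κ(t) = ⟨c''(t), c(t) × c'(t)⟩ is nowhere zero, and assume ∫₀ᴸ |κ(t)| dt ≤ π. Then for every t₀ ∈ [0,L], the tangent great circle of c at c(t₀) meets the trace of c only at c(t₀): for every t ∈ [0,L] with t ≠ t₀, the point c(t) does not lie in the linear span of {c(t₀), c'(t₀)}. -/
/-!
Fix `t₀`, let `n = c × c'` and `n₀ = n(t₀)`. On the sphere the frame `(c, c', n)` moves by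
`c'' = -c + κ n` and `n' = -κ c'`, so after absorbing the constant sign of `κ` the components
`u = ±⟨c, n₀⟩`, `v = ±⟨c', n₀⟩`, `w = ⟨n, n₀⟩` solve `u' = v`, `v' = -u + k w`, `w' = -k v` with
`k = |κ|` and `(u, v, w)(t₀) = (0, 0, 1)`; `c(t)` lies on the tangent great circle at `c(t₀)`
exactly when `u(t) = 0`. Running time backwards if necessary, it suffices to show `u > 0` after
`t₀`. Let `θ = ∫ k ≤ π`. As long as `u ≥ 0` we have `w ≥ cos θ`, and comparing `u'' + u = k w`
with `sin θ` over an interval of length at most `π/2` shows that `u` cannot return to `0`.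
-/

open Real

/-- Euclidean inner product on `ℝ³`. -/
noncomputable def dot3 (u v : Fin 3 → ℝ) : ℝ := ∑ m, u m * v m

/-- Cross product on `ℝ³`. -/
noncomputable def cross3 (u v : Fin 3 → ℝ) : Fin 3 → ℝ :=
  ![u 1 * v 2 - u 2 * v 1, u 2 * v 0 - u 0 * v 2, u 0 * v 1 - u 1 * v 0]

open Set Filter Topology MeasureTheory Matrix

theorem dot3_eq_dotProduct (u v : Fin 3 → ℝ) : dot3 u v = u ⬝ᵥ v := rfl

theorem cross3_eq_crossProduct (u v : Fin 3 → ℝ) : cross3 u v = u ⨯₃ v := rfl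

section Frame

variable {R : Type*} [CommRing R] {x y : Fin 3 → R}

theorem cross_cross_self_of_orthonormal (hx : x ⬝ᵥ x = 1) (hxy : x ⬝ᵥ y = 0) :
    x ⨯₃ (x ⨯₃ y) = -y := by
  rw [cross_cross_eq_smul_sub_smul', hxy, dotProduct_comm, hx]; simp

theorem cross_dot_cross_self_of_orthonormal (hx : x ⬝ᵥ x = 1) (hy : y ⬝ᵥ y = 1)
    (hxy : x ⬝ᵥ y = 0) : x ⨯₃ y ⬝ᵥ x ⨯₃ y = 1 := by
  rw [cross_dot_cross, hx, hy, hxy, dotProduct_comm y x, hxy]; ring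

theorem eq_sum_orthonormal_frame (hx : x ⬝ᵥ x = 1) (hy : y ⬝ᵥ y = 1) (hxy : x ⬝ᵥ y = 0)
    (z : Fin 3 → R) :
    z = (z ⬝ᵥ x) • x + (z ⬝ᵥ y) • y + (z ⬝ᵥ x ⨯₃ y) • (x ⨯₃ y) := by
  have hnx : x ⨯₃ y ⨯₃ x = y := by
    rw [cross_cross_eq_smul_sub_smul, hx, dotProduct_comm y x, hxy]; simp
  have hny : x ⨯₃ y ⨯₃ y = -x := by
    rw [cross_cross_eq_smul_sub_smul, hxy, hy]; simp
  have hzn : x ⨯₃ y ⨯₃ (z ⨯₃ (x ⨯₃ y)) = (z ⬝ᵥ x) • x + (z ⬝ᵥ y) • y := by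
    rw [cross_cross_eq_smul_sub_smul' z, map_sub, map_smul, map_smul, hnx, hny,
      dotProduct_comm x z]
    module
  have key := cross_cross_eq_smul_sub_smul' (x ⨯₃ y) z (x ⨯₃ y)
  rw [cross_dot_cross_self_of_orthonormal hx hy hxy, one_smul, hzn] at key
  linear_combination (norm := module) -key

end Frame

section Deriv

variable {𝕜 : Type*} [NontriviallyNormedField 𝕜] {s : Set 𝕜} {t : 𝕜}

theorem HasDerivWithinAt.dotProduct {ι : Type*} [Fintype ι] {f g : 𝕜 → ι → 𝕜} {f' g' : ι → 𝕜}
    (hf : HasDerivWithinAt f f' s t) (hg : HasDerivWithinAt g g' s t) :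
    HasDerivWithinAt (fun r => f r ⬝ᵥ g r) (f' ⬝ᵥ g t + f t ⬝ᵥ g') s t := by
  have := HasDerivWithinAt.fun_sum (u := Finset.univ) fun i _ =>
    (hasDerivWithinAt_pi.1 hf i).fun_mul (hasDerivWithinAt_pi.1 hg i)
  rw [_root_.dotProduct, _root_.dotProduct, ← Finset.sum_add_distrib]
  exact this

theorem HasDerivWithinAt.crossProduct {f g : 𝕜 → Fin 3 → 𝕜} {f' g' : Fin 3 → 𝕜}
    (hf : HasDerivWithinAt f f' s t) (hg : HasDerivWithinAt g g' s t) :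
    HasDerivWithinAt (fun r => f r ⨯₃ g r) (f' ⨯₃ g t + f t ⨯₃ g') s t := by
  have hf := hasDerivWithinAt_pi.1 hf
  have hg := hasDerivWithinAt_pi.1 hg
  refine hasDerivWithinAt_pi.2 fun i => ?_
  fin_cases i <;> simp only [cross_apply, Fin.isValue, Fin.zero_eta, Fin.mk_one, Fin.reduceFinMk,
    Pi.add_apply, cons_val_zero, cons_val_one, cons_val]
  · exact (((hf 1).fun_mul (hg 2)).fun_sub ((hf 2).fun_mul (hg 1))).congr_deriv (by ring)
  · exact (((hf 2).fun_mul (hg 0)).fun_sub ((hf 0).fun_mul (hg 2))).congr_deriv (by ring)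
  · exact (((hf 0).fun_mul (hg 1)).fun_sub ((hf 1).fun_mul (hg 0))).congr_deriv (by ring)

theorem HasDerivWithinAt.eq_zero_of_eqOn_const {F : Type*} [NormedAddCommGroup F]
    [NormedSpace 𝕜 F] {f : 𝕜 → F} {f' C : F} (hf : HasDerivWithinAt f f' s t)
    (hs : UniqueDiffWithinAt 𝕜 s t) (hC : EqOn f (fun _ => C) s) (ht : t ∈ s) : f' = 0 :=
  hs.eq_deriv s hf ((hasDerivWithinAt_const t s C).congr_of_mem hC ht)

end Deriv

theorem strictMonoOn_Icc_of_hasDerivWithinAt_pos {a b : ℝ} {f f' : ℝ → ℝ}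
    (hf : ∀ t ∈ Icc a b, HasDerivWithinAt f (f' t) (Icc a b) t)
    (hf' : ∀ t ∈ Ioo a b, 0 < f' t) : StrictMonoOn f (Icc a b) := by
  refine strictMonoOn_of_hasDerivWithinAt_pos (convex_Icc a b)
    (fun t ht => (hf t ht).continuousWithinAt) (fun t ht => ?_) (by simpa using hf')
  rw [interior_Icc] at ht ⊢
  exact (hf t (Ioo_subset_Icc_self ht)).mono Ioo_subset_Icc_self

theorem monotoneOn_Icc_of_hasDerivWithinAt_nonneg {a b : ℝ} {f f' : ℝ → ℝ}
    (hf : ∀ t ∈ Icc a b, HasDerivWithinAt f (f' t) (Icc a b) t)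
    (hf' : ∀ t ∈ Ioo a b, 0 ≤ f' t) : MonotoneOn f (Icc a b) := by
  refine monotoneOn_of_hasDerivWithinAt_nonneg (convex_Icc a b)
    (fun t ht => (hf t ht).continuousWithinAt) (fun t ht => ?_) (by simpa using hf')
  rw [interior_Icc] at ht ⊢
  exact (hf t (Ioo_subset_Icc_self ht)).mono Ioo_subset_Icc_self

theorem hasDerivWithinAt_integral_Icc {a b t : ℝ} {k : ℝ → ℝ} (hk : ContinuousOn k (Icc a b))
    (ht : t ∈ Icc a b) :
    HasDerivWithinAt (fun x => ∫ s in a..x, k s) (k t) (Icc a b) t := by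
  have : Fact (t ∈ Icc a b) := ⟨ht⟩
  refine intervalIntegral.integral_hasDerivWithinAt_right ?_
    (hk.stronglyMeasurableAtFilter_nhdsWithin measurableSet_Icc t) (hk t ht)
  exact (hk.mono (by rw [uIcc_of_le ht.1]; exact Icc_subset_Icc_right ht.2)).intervalIntegrable

/-- The components `u = ⟨c, m⟩`, `v = ⟨c', m⟩`, `w = ⟨c × c', m⟩` of a fixed vector `m` in the
Darboux frame of a unit-speed spherical curve `c` with geodesic curvature `k` solve this system. -/
structure DarbouxSolution (k u v w : ℝ → ℝ) (s : Set ℝ) : Prop where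
  hasDerivWithinAt_u : ∀ t ∈ s, HasDerivWithinAt u (v t) s t
  hasDerivWithinAt_v : ∀ t ∈ s, HasDerivWithinAt v (-u t + k t * w t) s t
  hasDerivWithinAt_w : ∀ t ∈ s, HasDerivWithinAt w (-(k t * v t)) s t

namespace DarbouxSolution

variable {k u v w θ : ℝ → ℝ} {s : Set ℝ} {a b : ℝ}

theorem mono (h : DarbouxSolution k u v w s) {s' : Set ℝ} (hs : s' ⊆ s) :
    DarbouxSolution k u v w s' where
  hasDerivWithinAt_u t ht := (h.hasDerivWithinAt_u t (hs ht)).mono hs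
  hasDerivWithinAt_v t ht := (h.hasDerivWithinAt_v t (hs ht)).mono hs
  hasDerivWithinAt_w t ht := (h.hasDerivWithinAt_w t (hs ht)).mono hs

theorem continuousOn_u (h : DarbouxSolution k u v w s) : ContinuousOn u s :=
  fun t ht => (h.hasDerivWithinAt_u t ht).continuousWithinAt

theorem comp_sub_left (h : DarbouxSolution k u v w s) (p : ℝ) :
    DarbouxSolution (fun t => k (p - t)) (fun t => u (p - t)) (fun t => -v (p - t))
      (fun t => w (p - t)) ((p - ·) ⁻¹' s) := by
  have hmaps : MapsTo (p - ·) ((p - ·) ⁻¹' s) s := mapsTo_preimage _ _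
  have hrefl (t : ℝ) : HasDerivWithinAt (p - ·) (-1) ((p - ·) ⁻¹' s) t := by
    simpa using ((hasDerivAt_id t).const_sub p).hasDerivWithinAt
  refine ⟨fun t ht => ?_, fun t ht => ?_, fun t ht => ?_⟩
  · exact ((h.hasDerivWithinAt_u _ ht).comp t (hrefl t) hmaps).congr_deriv (by ring)
  · exact ((h.hasDerivWithinAt_v _ ht).comp t (hrefl t) hmaps).neg.congr_deriv (by ring)
  · exact ((h.hasDerivWithinAt_w _ ht).comp t (hrefl t) hmaps).congr_deriv (by ring)

theorem cos_le_w_of_nonneg_u (h : DarbouxSolution k u v w (Icc a b))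
    (hθ : ∀ t ∈ Icc a b, HasDerivWithinAt θ (k t) (Icc a b) t) (hθmono : MonotoneOn θ (Icc a b))
    (hab : a ≤ b) (hθa : θ a = 0) (hθb : θ b ≤ π) (hu : ∀ t ∈ Ioo a b, 0 ≤ u t)
    (hva : v a = 0) (hwa : w a = 1) : cos (θ b) ≤ w b := by
  -- `(w cos θ + v sin θ, w sin θ - v cos θ)` moves with velocity `u (-sin θ, cos θ)`;
  -- `H` is its component in the direction of angle `θ b`.
  set H : ℝ → ℝ := fun r => (w r * sin (θ r) - v r * cos (θ r)) * sin (θ b)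
    + (w r * cos (θ r) + v r * sin (θ r)) * cos (θ b)
  have hH : ∀ r ∈ Icc a b, HasDerivWithinAt H (u r * sin (θ b - θ r)) (Icc a b) r := by
    intro r hr
    have hv := h.hasDerivWithinAt_v r hr
    have hw := h.hasDerivWithinAt_w r hr
    refine ((((hw.mul (hθ r hr).sin).sub (hv.mul (hθ r hr).cos)).mul_const (sin (θ b))).add
      (((hw.mul (hθ r hr).cos).add (hv.mul (hθ r hr).sin)).mul_const (cos (θ b)))).congr_deriv ?_
    rw [sin_sub]; ring
  have hHmono : MonotoneOn H (Icc a b) := by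
    refine monotoneOn_Icc_of_hasDerivWithinAt_nonneg hH fun r hr => mul_nonneg (hu r hr) ?_
    have hr' := Ioo_subset_Icc_self hr
    have hθr : 0 ≤ θ r := hθa ▸ hθmono (left_mem_Icc.2 hab) hr' hr.1.le
    exact sin_nonneg_of_nonneg_of_le_pi
      (sub_nonneg.2 (hθmono hr' (right_mem_Icc.2 hab) hr.2.le)) (by linarith)
  have hHa : H a = cos (θ b) := by simp [H, hθa, hva, hwa]
  have hHb : H b = w b := by linear_combination w b * sin_sq_add_cos_sq (θ b)
  rw [← hHa, ← hHb]
  exact hHmono (left_mem_Icc.2 hab) (right_mem_Icc.2 hab) hab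

theorem pos_of_cos_le_w (h : DarbouxSolution k u v w (Icc a b))
    (hθ : ∀ t ∈ Icc a b, HasDerivWithinAt θ (k t) (Icc a b) t) (hab : a < b)
    (hlen : b - a ≤ π / 2) (hk : ∀ t ∈ Ioo a b, 0 ≤ k t)
    (hcos : ∀ t ∈ Ioo a b, cos (θ t) ≤ w t) (hsin : ∀ t ∈ Ioo a b, 0 < sin (θ t))
    (hθa : θ a = 0) (hua : u a = 0) (hva : v a = 0) : 0 < u b := by
  -- Variation of constants for `u'' + u = k w`, corrected by `sin θ · sin (b - ·)` so that
  -- `w ≥ cos θ` makes `G` increase.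
  set G : ℝ → ℝ := fun r => u r * cos (b - r) + (v r - sin (θ r)) * sin (b - r)
  have hG : ∀ r ∈ Icc a b, HasDerivWithinAt G
      (k r * (w r - cos (θ r)) * sin (b - r) + sin (θ r) * cos (b - r)) (Icc a b) r := by
    intro r hr
    have hb : HasDerivWithinAt (fun r => b - r) (-1) (Icc a b) r :=
      (hasDerivWithinAt_id r _).const_sub b
    exact (((h.hasDerivWithinAt_u r hr).mul hb.cos).add
      (((h.hasDerivWithinAt_v r hr).fun_sub (hθ r hr).sin).mul hb.sin)).congr_deriv (by ring)
  have hGmono : StrictMonoOn G (Icc a b) := by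
    refine strictMonoOn_Icc_of_hasDerivWithinAt_pos hG fun r hr => ?_
    have hsin_br : 0 ≤ sin (b - r) := sin_nonneg_of_nonneg_of_le_pi (by linarith [hr.2])
      (by linarith [hr.1, pi_pos])
    have hcos_br : 0 < cos (b - r) := cos_pos_of_mem_Ioo ⟨by linarith [hr.2, pi_pos],
      by linarith [hr.1]⟩
    have := mul_nonneg (mul_nonneg (hk r hr) (sub_nonneg.2 (hcos r hr))) hsin_br
    have := mul_pos (hsin r hr) hcos_br
    linarith
  have hGa : G a = 0 := by simp [G, hθa, hua, hva]
  have hGb : G b = u b := by simp [G]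
  rw [← hGa, ← hGb]
  exact hGmono (left_mem_Icc.2 hab.le) (right_mem_Icc.2 hab.le) hab

theorem exists_pos_on_Ioc (h : DarbouxSolution k u v w (Icc a b)) (hab : a < b)
    (hk : ContinuousWithinAt k (Icc a b) a) (hka : 0 < k a) (hua : u a = 0) (hva : v a = 0)
    (hwa : w a = 1) : ∃ a₁ ∈ Ioc a b, ∀ t ∈ Ioc a a₁, 0 < u t := by
  have ha : a ∈ Icc a b := left_mem_Icc.2 hab.le
  have hv' : ∀ᶠ t in 𝓝[≥] a, 0 < -u t + k t * w t := by
    rw [← nhdsWithin_Icc_eq_nhdsGE hab]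
    refine (((h.hasDerivWithinAt_u a ha).continuousWithinAt.neg).add
      (hk.mul (h.hasDerivWithinAt_w a ha).continuousWithinAt)).eventually (lt_mem_nhds ?_)
    simpa [hua, hwa] using hka
  obtain ⟨a₂, ha₂, hsub⟩ := mem_nhdsGE_iff_exists_Icc_subset.1 hv'
  have hsub' : Icc a (min b a₂) ⊆ Icc a b := Icc_subset_Icc_right (min_le_left _ _)
  have h₁ := h.mono hsub'
  have hvmono := strictMonoOn_Icc_of_hasDerivWithinAt_pos h₁.hasDerivWithinAt_v
    fun t ht => hsub ⟨ht.1.le, ht.2.le.trans (min_le_right _ _)⟩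
  have hleft : a ∈ Icc a (min b a₂) := left_mem_Icc.2 (le_min hab.le (le_of_lt ha₂))
  have humono := strictMonoOn_Icc_of_hasDerivWithinAt_pos h₁.hasDerivWithinAt_u
    fun t ht => hva ▸ hvmono hleft (Ioo_subset_Icc_self ht) ht.1
  exact ⟨min b a₂, ⟨lt_min hab ha₂, min_le_left _ _⟩,
    fun t ht => hua ▸ humono hleft (Ioc_subset_Icc_self ht) ht.1⟩

theorem pos_of_pos_on_Ioo (h : DarbouxSolution k u v w (Icc a b))
    (hθ : ∀ t ∈ Icc a b, HasDerivWithinAt θ (k t) (Icc a b) t)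
    (hθmono : StrictMonoOn θ (Icc a b)) (hab : a < b) (hlen : b - a ≤ π / 2)
    (hk : ∀ t ∈ Ioo a b, 0 ≤ k t) (hθa : θ a = 0) (hθb : θ b ≤ π) (hua : u a = 0)
    (hva : v a = 0) (hwa : w a = 1) (hu : ∀ t ∈ Ioo a b, 0 < u t) : 0 < u b := by
  have hb : b ∈ Icc a b := right_mem_Icc.2 hab.le
  have hcos : ∀ s ∈ Ioo a b, cos (θ s) ≤ w s := fun s hs =>
    have hsb : Icc a s ⊆ Icc a b := Icc_subset_Icc_right hs.2.le
    (h.mono hsb).cos_le_w_of_nonneg_u (fun r hr => (hθ r (hsb hr)).mono hsb)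
      (hθmono.monotoneOn.mono hsb) hs.1.le hθa
      ((hθmono.monotoneOn (Ioo_subset_Icc_self hs) hb hs.2.le).trans hθb)
      (fun r hr => (hu r ⟨hr.1, hr.2.trans hs.2⟩).le) hva hwa
  refine h.pos_of_cos_le_w hθ hab hlen hk hcos (fun r hr => ?_) hθa hua hva
  have hr' := Ioo_subset_Icc_self hr
  exact sin_pos_of_pos_of_lt_pi (hθa ▸ hθmono (left_mem_Icc.2 hab.le) hr' hr.1)
    ((hθmono hr' hb hr.2).trans_le hθb)

theorem pos_of_integral_le_pi (h : DarbouxSolution k u v w (Icc a b)) (hlen : b - a ≤ π / 2)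
    (hk : ContinuousOn k (Icc a b)) (hkpos : ∀ t ∈ Icc a b, 0 < k t)
    (hint : ∫ t in a..b, k t ≤ π) (hua : u a = 0) (hva : v a = 0) (hwa : w a = 1) {t : ℝ}
    (ht : t ∈ Ioc a b) : 0 < u t := by
  have hab : a < b := ht.1.trans_le ht.2
  set θ : ℝ → ℝ := fun t => ∫ s in a..t, k s
  have hθ : ∀ t ∈ Icc a b, HasDerivWithinAt θ (k t) (Icc a b) t :=
    fun t ht => hasDerivWithinAt_integral_Icc hk ht
  have hθmono : StrictMonoOn θ (Icc a b) :=
    strictMonoOn_Icc_of_hasDerivWithinAt_pos hθ fun t ht => hkpos t (Ioo_subset_Icc_self ht)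
  obtain ⟨a₁, ha₁, hkick⟩ :=
    h.exists_pos_on_Ioc hab (hk a (left_mem_Icc.2 hab.le)) (hkpos a (left_mem_Icc.2 hab.le))
      hua hva hwa
  by_contra! hut
  have ha₁t : a₁ ≤ t := le_of_not_gt fun hta₁ => (hkick t ⟨ht.1, hta₁.le⟩).not_ge hut
  -- `c` is the first point after `a` where `u ≤ 0`
  have hZ : IsCompact (Icc a₁ t ∩ u ⁻¹' Iic 0) :=
    isCompact_Icc.of_isClosed_subset ((h.continuousOn_u.mono (Icc_subset_Icc ha₁.1.le ht.2)
      ).preimage_isClosed_of_isClosed isClosed_Icc isClosed_Iic) inter_subset_left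
  obtain ⟨c, ⟨hc, hcu⟩, hcmin⟩ := hZ.exists_isLeast ⟨t, ⟨ha₁t, le_rfl⟩, hut⟩
  have hac : a < c := ha₁.1.trans_le hc.1
  have hcb : Icc a c ⊆ Icc a b := Icc_subset_Icc_right (hc.2.trans ht.2)
  refine hcu.not_gt ((h.mono hcb).pos_of_pos_on_Ioo (fun r hr => (hθ r (hcb hr)).mono hcb)
    (hθmono.mono hcb) hac (by linarith [hc.2, ht.2])
    (fun r hr => (hkpos r (hcb (Ioo_subset_Icc_self hr))).le) intervalIntegral.integral_same
    ((hθmono.monotoneOn (hcb (right_mem_Icc.2 hac.le)) (right_mem_Icc.2 hab.le)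
      (hc.2.trans ht.2)).trans hint) hua hva hwa fun s hs => ?_)
  rcases le_or_gt s a₁ with hs₁ | hs₁
  · exact hkick s ⟨hs.1, hs₁⟩
  · exact lt_of_not_ge fun hus => (hcmin ⟨⟨hs₁.le, hs.2.le.trans hc.2⟩, hus⟩).not_gt hs.2

theorem ne_zero_of_integral_le_pi (h : DarbouxSolution k u v w (Icc a b))
    (hlen : b - a ≤ π / 2) (hk : ContinuousOn k (Icc a b)) (hkpos : ∀ t ∈ Icc a b, 0 < k t)
    (hint : ∫ t in a..b, k t ≤ π) {t₀ : ℝ} (ht₀ : t₀ ∈ Icc a b) (hu : u t₀ = 0)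
    (hv : v t₀ = 0) (hw : w t₀ = 1) {t : ℝ} (ht : t ∈ Icc a b) (hne : t ≠ t₀) : u t ≠ 0 := by
  have hint' : ∀ a' b', a ≤ a' → a' ≤ b' → b' ≤ b → ∫ t in a'..b', k t ≤ π :=
    fun a' b' ha hab hb => (intervalIntegral.integral_mono_interval ha hab hb
      ((ae_restrict_iff' measurableSet_Ioc).2 (Eventually.of_forall
        fun t ht => (hkpos t (Ioc_subset_Icc_self ht)).le))
      (hk.intervalIntegrable_of_Icc (ha.trans (hab.trans hb)))).trans hint
  rcases hne.lt_or_gt with hlt | hgt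
  · have hsub : Icc a t₀ ⊆ Icc a b := Icc_subset_Icc_right ht₀.2
    have hr := (h.mono hsub).comp_sub_left (a + t₀)
    rw [preimage_const_sub_Icc, add_sub_cancel_right, add_sub_cancel_left] at hr
    have hmaps : MapsTo (fun s => a + t₀ - s) (Icc a t₀) (Icc a b) := fun s hs =>
      ⟨by linarith [hs.2], by linarith [hs.1, ht₀.2]⟩
    have := hr.pos_of_integral_le_pi (by linarith [ht₀.2])
      (hk.comp (continuousOn_const.sub continuousOn_id) hmaps)
      (fun s hs => hkpos _ (hmaps hs)) ?_ (by simpa using hu) (by simpa using hv)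
      (by simpa using hw) (t := a + t₀ - t) ⟨by linarith, by linarith [ht.1]⟩
    · simpa using this.ne'
    · rw [intervalIntegral.integral_comp_sub_left, add_sub_cancel_right, add_sub_cancel_left]
      exact hint' a t₀ le_rfl ht₀.1 ht₀.2
  · have hsub : Icc t₀ b ⊆ Icc a b := Icc_subset_Icc_left ht₀.1
    exact ((h.mono hsub).pos_of_integral_le_pi (by linarith [ht₀.1]) (hk.mono hsub)
      (fun s hs => hkpos s (hsub hs)) (hint' t₀ b ht₀.1 ht₀.2 le_rfl) hu hv hw
      ⟨hgt, ht.2⟩).ne'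

end DarbouxSolution

theorem ContinuousOn.dotProduct_crossProduct {α : Type*} [TopologicalSpace α] {s : Set α}
    {f g h : α → Fin 3 → ℝ} (hf : ContinuousOn f s) (hg : ContinuousOn g s)
    (hh : ContinuousOn h s) : ContinuousOn (fun x => f x ⬝ᵥ g x ⨯₃ h x) s := by
  simp only [cross_apply, vec3_dotProduct, Fin.isValue, Nat.succ_eq_add_one, Nat.reduceAdd,
    cons_val_zero, cons_val_one, cons_val]
  fun_prop

theorem dotProduct_crossProduct_eq_zero_of_mem_span {R : Type*} [CommRing R]
    {x y z : Fin 3 → R} (hz : z ∈ Submodule.span R {x, y}) : z ⬝ᵥ x ⨯₃ y = 0 := by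
  obtain ⟨α, β, rfl⟩ := Submodule.mem_span_pair.1 hz
  simp [add_dotProduct, dot_self_cross, dot_cross_self]

theorem IsPreconnected.exists_abs_eq_mul {α : Type*} [TopologicalSpace α] {S : Set α}
    {f : α → ℝ} (hS : IsPreconnected S) (hf : ContinuousOn f S) (hf0 : ∀ x ∈ S, f x ≠ 0) :
    ∃ e : ℝ, e * e = 1 ∧ ∀ x ∈ S, |f x| = e * f x := by
  rcases hS.eq_or_eq_neg_of_sq_eq hf.abs hf (fun x _ => by simp [sq_abs]) (hf0 _) with h | h
  · exact ⟨1, by norm_num, fun x hx => by simp [h hx]⟩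
  · exact ⟨-1, by norm_num, fun x hx => by simp [h hx]⟩

section SphericalCurve

variable {s : Set ℝ} {c c' c'' : ℝ → Fin 3 → ℝ}

theorem dotProduct_velocity_eq_zero (hs : UniqueDiffOn ℝ s)
    (hc : ∀ t ∈ s, HasDerivWithinAt c (c' t) s t) (hsphere : ∀ t ∈ s, c t ⬝ᵥ c t = 1) {t : ℝ}
    (ht : t ∈ s) : c t ⬝ᵥ c' t = 0 := by
  have := ((hc t ht).dotProduct (hc t ht)).eq_zero_of_eqOn_const (hs t ht) hsphere ht
  rw [dotProduct_comm] at this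
  linarith

theorem acceleration_eq_of_sphere (hs : UniqueDiffOn ℝ s)
    (hc : ∀ t ∈ s, HasDerivWithinAt c (c' t) s t) (hc' : ∀ t ∈ s, HasDerivWithinAt c' (c'' t) s t)
    (hsphere : ∀ t ∈ s, c t ⬝ᵥ c t = 1) (hunit : ∀ t ∈ s, c' t ⬝ᵥ c' t = 1) {t : ℝ}
    (ht : t ∈ s) : c'' t = -c t + (c'' t ⬝ᵥ c t ⨯₃ c' t) • (c t ⨯₃ c' t) := by
  have hcc' := dotProduct_velocity_eq_zero hs hc hsphere ht
  have hc''c' : c'' t ⬝ᵥ c' t = 0 := by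
    have := ((hc' t ht).dotProduct (hc' t ht)).eq_zero_of_eqOn_const (hs t ht) hunit ht
    rw [dotProduct_comm (c' t)] at this
    linarith
  have hc''c : c'' t ⬝ᵥ c t = -1 := by
    have := ((hc t ht).dotProduct (hc' t ht)).eq_zero_of_eqOn_const (hs t ht)
      (fun r hr => dotProduct_velocity_eq_zero hs hc hsphere hr) ht
    rw [hunit t ht, dotProduct_comm (c t)] at this
    linarith
  calc c'' t = _ := eq_sum_orthonormal_frame (hsphere t ht) (hunit t ht) hcc' (c'' t)
    _ = _ := by rw [hc''c', hc''c]; module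

theorem darbouxSolution_of_sphere (hs : UniqueDiffOn ℝ s)
    (hc : ∀ t ∈ s, HasDerivWithinAt c (c' t) s t) (hc' : ∀ t ∈ s, HasDerivWithinAt c' (c'' t) s t)
    (hsphere : ∀ t ∈ s, c t ⬝ᵥ c t = 1) (hunit : ∀ t ∈ s, c' t ⬝ᵥ c' t = 1) {e : ℝ}
    (he : e * e = 1) (m : Fin 3 → ℝ) :
    DarbouxSolution (fun t => e * (c'' t ⬝ᵥ c t ⨯₃ c' t)) (fun t => e * (c t ⬝ᵥ m))
      (fun t => e * (c' t ⬝ᵥ m)) (fun t => c t ⨯₃ c' t ⬝ᵥ m) s where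
  hasDerivWithinAt_u t ht :=
    (((hc t ht).dotProduct (hasDerivWithinAt_const t s m)).const_mul e).congr_deriv (by simp)
  hasDerivWithinAt_v t ht := by
    have hacc := congrArg (· ⬝ᵥ m) (acceleration_eq_of_sphere hs hc hc' hsphere hunit ht)
    simp only [add_dotProduct, neg_dotProduct, smul_dotProduct, smul_eq_mul] at hacc
    refine (((hc' t ht).dotProduct (hasDerivWithinAt_const t s m)).const_mul e).congr_deriv ?_
    rw [dotProduct_zero, add_zero, hacc]
    ring
  hasDerivWithinAt_w t ht := by
    have hacc := congrArg (fun x => c t ⨯₃ x ⬝ᵥ m)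
      (acceleration_eq_of_sphere hs hc hc' hsphere hunit ht)
    simp only [map_add, map_neg, map_smul, cross_self, neg_zero, zero_add,
      cross_cross_self_of_orthonormal (hsphere t ht) (dotProduct_velocity_eq_zero hs hc hsphere ht),
      smul_dotProduct, neg_dotProduct, smul_eq_mul] at hacc
    refine (((hc t ht).crossProduct (hc' t ht)).dotProduct
      (hasDerivWithinAt_const t s m)).congr_deriv ?_
    rw [cross_self, zero_add, dotProduct_zero, add_zero, hacc]
    linear_combination (c'' t ⬝ᵥ c t ⨯₃ c' t) * (c' t ⬝ᵥ m) * he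

end SphericalCurve

/-- a unit-speed `C²` spherical curve of length at most `π/2` with nowhere
vanishing geodesic curvature and total geodesic curvature `∫₀ᴸ |κ| ≤ π` meets each of its
tangent great circles only at the point of tangency: for `t ≠ t₀`, `c(t)` does not lie in
`Span{c(t₀), c'(t₀)}`. -/
theorem stmt18 (L : ℝ) (hL : L ∈ Set.Ioc 0 (π/2))
    (c c' c'' : ℝ → (Fin 3 → ℝ))
    (hderiv : ∀ t ∈ Set.Icc 0 L, HasDerivWithinAt c (c' t) (Set.Icc 0 L) t)
    (hderiv2 : ∀ t ∈ Set.Icc 0 L, HasDerivWithinAt c' (c'' t) (Set.Icc 0 L) t)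
    (hc''cont : ContinuousOn c'' (Set.Icc 0 L))
    (hsphere : ∀ t ∈ Set.Icc 0 L, dot3 (c t) (c t) = 1)
    (hunit : ∀ t ∈ Set.Icc 0 L, dot3 (c' t) (c' t) = 1)
    (hcurv : ∀ t ∈ Set.Icc 0 L, dot3 (c'' t) (cross3 (c t) (c' t)) ≠ 0)
    (htotal : (∫ t in (0:ℝ)..L, |dot3 (c'' t) (cross3 (c t) (c' t))|) ≤ π) :
    ∀ t₀ ∈ Set.Icc 0 L, ∀ t ∈ Set.Icc 0 L, t ≠ t₀ →
      c t ∉ Submodule.span ℝ ({c t₀, c' t₀} : Set (Fin 3 → ℝ)) := by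
  simp only [dot3_eq_dotProduct, cross3_eq_crossProduct] at *
  have hs : UniqueDiffOn ℝ (Icc 0 L) := uniqueDiffOn_Icc hL.1
  have hκ : ContinuousOn (fun t => c'' t ⬝ᵥ c t ⨯₃ c' t) (Icc 0 L) :=
    hc''cont.dotProduct_crossProduct (fun t ht => (hderiv t ht).continuousWithinAt)
      (fun t ht => (hderiv2 t ht).continuousWithinAt)
  obtain ⟨e, he, habs⟩ := isPreconnected_Icc.exists_abs_eq_mul hκ hcurv
  intro t₀ ht₀ t ht hne hmem
  have hsol := darbouxSolution_of_sphere hs hderiv hderiv2 hsphere hunit he (c t₀ ⨯₃ c' t₀)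
  refine hsol.ne_zero_of_integral_le_pi (by linarith [hL.2]) (continuousOn_const.mul hκ)
    (fun r hr => habs r hr ▸ abs_pos.2 (hcurv r hr)) ?_ ht₀ (by simp [dot_self_cross])
    (by simp [dot_cross_self]) (cross_dot_cross_self_of_orthonormal (hsphere t₀ ht₀)
      (hunit t₀ ht₀) (dotProduct_velocity_eq_zero hs hderiv hsphere ht₀)) ht hne ?_
  · rw [← intervalIntegral.integral_congr fun r hr => habs r (uIcc_of_le hL.1.le ▸ hr)]
    exact htotal
  · simp [dotProduct_crossProduct_eq_zero_of_mem_span hmem]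
end

section
/- Let (l,ω) ∈ (0,π/2)×(0,π/2) and let δ₊(t) = cos(t)·k + sin(t)·v₊ for t ∈ [0,l]. With J_x = (√2·sin(2ω), 0, cos(2l)+cos(2ω), 0)/√(2·sin²(2ω)+(cos(2l)+cos(2ω))²) and J_α = (√2·cos(l)·sin(ω), 0, cos(l)·cos(ω), −sin(l)·sin(ω))/√(cos²l+sin²ω), one has for every t ∈ [0,l]: ⟨δ₊(t), J_α⟩ = sin(ω)·sin(t−l)/√(cos²l+sin²ω) ≤ 0 and ⟨δ₊(t), J_x⟩ ≥ 0. (Thus the edge δ₊ of the pentagon lies in the closed half-space bounded by the totally geodesic two-sphere with normal J_α containing k, and in the closed half-space bounded by the totally geodesic two-sphere with normal J_x containing e.) -/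
open Real

/-- The edge `δ₊(t) = cos t · k + sin t · v₊`. -/
noncomputable def deltaP (t : ℝ) : Fin 4 → ℝ := Real.cos t • vK + Real.sin t • vP

/-- along the edge `δ₊`, for `t ∈ [0,l]` one has
`⟨δ₊(t), J_α⟩ = sin ω · sin(t−l)/√(cos²l + sin²ω) ≤ 0` and `⟨δ₊(t), J_x⟩ ≥ 0`. -/
theorem stmt19 (l ω : ℝ) (hl : l ∈ Set.Ioo 0 (π/2)) (hω : ω ∈ Set.Ioo 0 (π/2)) :
    ∀ t ∈ Set.Icc (0:ℝ) l,
      dot4 (deltaP t) (Ja l ω) =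
        Real.sin ω * Real.sin (t - l) / Real.sqrt (Real.cos l ^ 2 + Real.sin ω ^ 2) ∧
      dot4 (deltaP t) (Ja l ω) ≤ 0 ∧
      0 ≤ dot4 (deltaP t) (Jx l ω) := by
  intro t ht
  have hpi : (0:ℝ) < π := Real.pi_pos
  have hsω : 0 < Real.sin ω := Real.sin_pos_of_pos_of_lt_pi hω.1 (by linarith [hω.2])
  have hcl : 0 < Real.cos l := Real.cos_pos_of_mem_Ioo ⟨by linarith [hl.1], hl.2⟩
  have hc : 0 < Real.sqrt (Real.cos l ^ 2 + Real.sin ω ^ 2) :=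
    Real.sqrt_pos.mpr (by positivity)
  have hst : 0 ≤ Real.sin t :=
    Real.sin_nonneg_of_nonneg_of_le_pi ht.1 (by linarith [ht.2, hl.2])
  have h2 : Real.sqrt 2 ≠ 0 := by positivity
  have h22 : Real.sqrt 2 * Real.sqrt 2 = 2 := Real.mul_self_sqrt (by norm_num)
  have heq : dot4 (deltaP t) (Ja l ω) =
      Real.sin ω * Real.sin (t - l) / Real.sqrt (Real.cos l ^ 2 + Real.sin ω ^ 2) := by
    simp only [dot4, deltaP, Ja, vK, vP, Fin.sum_univ_four, Pi.add_apply, Pi.smul_apply,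
      Matrix.cons_val_zero, Matrix.cons_val_one, Matrix.head_cons, Matrix.cons_val_two,
      Matrix.tail_cons, Matrix.cons_val_three, smul_eq_mul, Real.sin_sub]
    field_simp
    ring_nf
  refine ⟨heq, ?_, ?_⟩
  · rw [heq]
    have hstl : Real.sin (t - l) ≤ 0 := by
      have := Real.sin_nonneg_of_nonneg_of_le_pi (x := l - t) (by linarith [ht.2]) (by linarith [ht.1, hl.2])
      rw [show t - l = -(l - t) by ring, Real.sin_neg]
      linarith
    have : Real.sin ω * Real.sin (t - l) ≤ 0 := mul_nonpos_of_nonneg_of_nonpos hsω.le hstl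
    exact div_nonpos_of_nonpos_of_nonneg this hc.le
  · have hs2ω : 0 < Real.sin (2 * ω) :=
      Real.sin_pos_of_pos_of_lt_pi (by linarith [hω.1]) (by linarith [hω.2])
    have hd : 0 ≤ (Real.sqrt (2 * Real.sin (2*ω) ^ 2 + (Real.cos (2*l) + Real.cos (2*ω)) ^ 2))⁻¹ := by
      positivity
    have heq2 : dot4 (deltaP t) (Jx l ω) =
        (Real.sqrt (2 * Real.sin (2*ω) ^ 2 + (Real.cos (2*l) + Real.cos (2*ω)) ^ 2))⁻¹ *
          (Real.sin t * Real.sin (2 * ω)) := by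
      simp only [dot4, deltaP, Jx, vK, vP, Fin.sum_univ_four, Pi.add_apply, Pi.smul_apply,
        Matrix.cons_val_zero, Matrix.cons_val_one, Matrix.head_cons, Matrix.cons_val_two,
        Matrix.tail_cons, Matrix.cons_val_three, smul_eq_mul]
      field_simp
      ring_nf
    rw [heq2]
    positivity
end
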